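/- Let σ be a trace and e1, e2, e2' events with e1 <_σ e2, e2 ≤_TO e2', e1 conflicting with e2 and with e2'. If (e1, e2) is not a sync-preserving race of σ, then (e1, e2') is also not a sync-preserving race of σ. -/

import Mathlib

/- A model of concurrent program traces: events are read/write/acquire/release
operations performed by threads; a trace is a finite sequence of events,
identified by their indices. -/

inductive Op where
  | read  (x : ℕ)
  | write (x : ℕ)
  | acq (l : ℕ)
  | rel (l : ℕ)
deriving DecidableEq

structure Event where
  thread : ℕ
  op : Op
deriving DecidableEq

def evAt (σ : List Event) (i : ℕ) : Event := σ.getD i ⟨0, Op.read 0⟩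

def threadOf (σ : List Event) (i : ℕ) : ℕ := (evAt σ i).thread

def isAcq (σ : List Event) (l i : ℕ) : Prop := i < σ.length ∧ (evAt σ i).op = Op.acq l
def isRel (σ : List Event) (l i : ℕ) : Prop := i < σ.length ∧ (evAt σ i).op = Op.rel l
def isRead (σ : List Event) (x i : ℕ) : Prop := i < σ.length ∧ (evAt σ i).op = Op.read x
def isWrite (σ : List Event) (x i : ℕ) : Prop := i < σ.length ∧ (evAt σ i).op = Op.write x

/-- `e` is an event on lock `l` (an acquire or release of `l`). -/
def onLock (l : ℕ) (e : Event) : Bool := decide (e.op = Op.acq l ∨ e.op = Op.rel l)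

/-- Thread order: `i` and `j` are events of the same thread with `i` not after `j`. -/
def TO (σ : List Event) (i j : ℕ) : Prop :=
  i ≤ j ∧ j < σ.length ∧ threadOf σ i = threadOf σ j

/-- Alternating sequence of matched acquire/release pairs on lock `l`, each pair
performed by a single thread, with at most one unmatched acquire at the end. -/
inductive LockAlt (l : ℕ) : List Event → Prop
  | nil : LockAlt l []
  | pending (t : ℕ) : LockAlt l [⟨t, Op.acq l⟩]
  | pair (t : ℕ) {rest : List Event} : LockAlt l rest →
      LockAlt l (⟨t, Op.acq l⟩ :: ⟨t, Op.rel l⟩ :: rest)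

/-- Well-formedness of an event sequence: for each lock, the projection alternates
matched acquire/release pairs, with at most one pending acquire. -/
def WellFormedEvents (es : List Event) : Prop := ∀ l, LockAlt l (es.filter (onLock l))

/-- Words of the language `(Σ_t ⟨t, acq(l)⟩ · ⟨t, rel(l)⟩)*`. -/
inductive PairsLang (l : ℕ) : List Event → Prop
  | nil : PairsLang l []
  | pair (t : ℕ) {rest : List Event} : PairsLang l rest →
      PairsLang l (⟨t, Op.acq l⟩ :: ⟨t, Op.rel l⟩ :: rest)

/-- Lock semantics: for every lock `l`, the projection of the trace onto events on `l`
is a prefix of a word in the language `(Σ_t ⟨t, acq(l)⟩ · ⟨t, rel(l)⟩)*`. -/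
def LockSem (σ : List Event) : Prop :=
  ∀ l, ∃ w, PairsLang l w ∧ (σ.filter (onLock l)) <+: w

/-- Thread `t` holds lock `l` after the prefix of length `n`: the last event of the
prefix on lock `l` is an acquire of `l` by `t`. -/
def Holds (σ : List Event) (n t l : ℕ) : Prop :=
  ∃ i, i < n ∧ isAcq σ l i ∧ threadOf σ i = t ∧
    ∀ j, i < j → j < n → j < σ.length → onLock l (evAt σ j) = false

/-- `r` is the matching release of the acquire `a`: same thread, same lock, with no
intervening event on that lock in between. -/
def MatchRel (σ : List Event) (a r : ℕ) : Prop :=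
  ∃ l, isAcq σ l a ∧ isRel σ l r ∧ a < r ∧ threadOf σ a = threadOf σ r ∧
    ∀ k, a < k → k < r → ¬ (isAcq σ l k ∨ isRel σ l k)

/-- `i` is the last write (on the common variable) before the read `j` in `σ`. -/
def LastWrite (σ : List Event) (i j : ℕ) : Prop :=
  ∃ x, isWrite σ x i ∧ isRead σ x j ∧ i < j ∧ ∀ k, i < k → k < j → ¬ isWrite σ x k

/-- `i` is the immediate thread-order predecessor of `j` in `σ`. -/
def Prev (σ : List Event) (j i : ℕ) : Prop :=
  i < j ∧ j < σ.length ∧ threadOf σ i = threadOf σ j ∧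
    ∀ k, i < k → k < j → threadOf σ k ≠ threadOf σ j

/-- `S` is downward-closed with respect to thread order. -/
def TODownClosed (σ : List Event) (S : Set ℕ) : Prop :=
  ∀ i j, TO σ i j → j ∈ S → i ∈ S

/-- `S` is `(TO, lw)`-closed. -/
def TOLWClosed (σ : List Event) (S : Set ℕ) : Prop :=
  TODownClosed σ S ∧ ∀ i j, LastWrite σ i j → j ∈ S → i ∈ S

/-- `S` is sync-preserving closed. -/
def SPClosed (σ : List Event) (S : Set ℕ) : Prop :=
  TOLWClosed σ S ∧
    ∀ l a1 a2 r1, isAcq σ l a1 → isAcq σ l a2 → a1 < a2 →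
      a1 ∈ S → a2 ∈ S → MatchRel σ a1 r1 → r1 ∈ S

/-- The sync-preserving closure of `S`. -/
def SPClosure (σ : List Event) (S : Set ℕ) : Set ℕ :=
  ⋂₀ {S' : Set ℕ | S ⊆ S' ∧ SPClosed σ S'}

def PrevSet (σ : List Event) (j : ℕ) : Set ℕ := {i | Prev σ j i}

def SPIdeal (σ : List Event) (e1 e2 : ℕ) : Set ℕ :=
  SPClosure σ (PrevSet σ e1 ∪ PrevSet σ e2)

/-- `i` occurs before `j` in the reordering `ρ` (a list of σ-indices). -/
def RBefore (ρ : List ℕ) (i j : ℕ) : Prop :=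
  i ∈ ρ ∧ j ∈ ρ ∧ ρ.idxOf i < ρ.idxOf j

/-- `i` is the last write before the read `j` in the reordering `ρ`. -/
def LastWriteIn (σ : List Event) (ρ : List ℕ) (i j : ℕ) : Prop :=
  ∃ x, isWrite σ x i ∧ isRead σ x j ∧ RBefore ρ i j ∧
    ∀ k, isWrite σ x k → ¬ (RBefore ρ i k ∧ RBefore ρ k j)

/-- `ρ` (a duplicate-free list of σ-indices, read as a trace) is a correct reordering
of `σ`: a well-formed trace over a subset of events of `σ` that is downward-closed
under thread order, respects thread order, and in which every read observes the
same last write as in `σ`. -/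
def CorrectReordering (σ : List Event) (ρ : List ℕ) : Prop :=
  ρ.Nodup ∧ (∀ i ∈ ρ, i < σ.length) ∧
  WellFormedEvents (ρ.map (evAt σ)) ∧
  (∀ i j, TO σ i j → j ∈ ρ → i ∈ ρ) ∧
  (∀ i j, i ∈ ρ → j ∈ ρ → i ≠ j → TO σ i j → RBefore ρ i j) ∧
  (∀ j x, isRead σ x j → j ∈ ρ → ∀ i, LastWriteIn σ ρ i j ↔ LastWrite σ i j)

/-- Event `e` of `σ` is σ-enabled in the reordering `ρ`. -/
def EnabledIn (σ : List Event) (ρ : List ℕ) (e : ℕ) : Prop :=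
  e < σ.length ∧ e ∉ ρ ∧ ∀ i, i ≠ e → TO σ i e → i ∈ ρ

/-- `ρ` is sync-preserving w.r.t. `σ`: any two same-lock acquires occurring in `ρ`
appear in the same relative order as in `σ`. -/
def SyncPreserving (σ : List Event) (ρ : List ℕ) : Prop :=
  ∀ l a1 a2, isAcq σ l a1 → isAcq σ l a2 → a1 ∈ ρ → a2 ∈ ρ →
    (RBefore ρ a1 a2 ↔ a1 < a2)

/-- Conflicting events: different threads, common variable, at least one write. -/
def Conflict (σ : List Event) (i j : ℕ) : Prop :=
  i < σ.length ∧ j < σ.length ∧ threadOf σ i ≠ threadOf σ j ∧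
    ∃ x, (isWrite σ x i ∧ (isWrite σ x j ∨ isRead σ x j)) ∨
         (isRead σ x i ∧ isWrite σ x j)

/-- `(e1, e2)` is a sync-preserving race of `σ`. -/
def SPRace (σ : List Event) (e1 e2 : ℕ) : Prop :=
  Conflict σ e1 e2 ∧ ∃ ρ : List ℕ, CorrectReordering σ ρ ∧ SyncPreserving σ ρ ∧
    EnabledIn σ ρ e1 ∧ EnabledIn σ ρ e2

/-- Happens-before: smallest transitive relation containing thread order and
ordering each release of a lock before every later acquire of that lock. -/
inductive HB (σ : List Event) : ℕ → ℕ → Prop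
  | to {i j : ℕ} : TO σ i j → HB σ i j
  | relacq {l i j : ℕ} : isRel σ l i → isAcq σ l j → i < j → HB σ i j
  | trans {i j k : ℕ} : HB σ i j → HB σ j k → HB σ i k

/-- Schedulable-happens-before: smallest transitive relation containing HB and
ordering each write of a variable before every later read of that variable. -/
inductive SHB (σ : List Event) : ℕ → ℕ → Prop
  | hb {i j : ℕ} : HB σ i j → SHB σ i j
  | wr {x i j : ℕ} : isWrite σ x i → isRead σ x j → i < j → SHB σ i j
  | trans {i j k : ℕ} : SHB σ i j → SHB σ j k → SHB σ i k

/-! Let `ρ` witness the race `(e1, e2')`; as `e2` is a thread-order predecessor of `e2'`, it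
occurs in `ρ`. Restrict `ρ` to its events that precede `e2` in `ρ` or `e1` in `σ`. This set
is sync-preserving closed, and the restriction of a sync-preserving correct reordering to a
sync-preserving closed set is again one: the lock discipline survives because a kept acquire
followed by a later kept acquire of the same lock has its matching release kept. In the
restriction both `e1` and `e2` are enabled, so `(e1, e2)` would be a race. -/

namespace RBefore

variable {L : List ℕ} {i j k : ℕ}

lemma irrefl (h : RBefore L i i) : False := lt_irrefl _ h.2.2

lemma asymm (h : RBefore L i j) (h' : RBefore L j i) : False := lt_asymm h.2.2 h'.2.2

lemma trans (h : RBefore L i j) (h' : RBefore L j k) : RBefore L i k :=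
  ⟨h.1, h'.2.1, h.2.2.trans h'.2.2⟩

lemma total (hi : i ∈ L) (hj : j ∈ L) (hne : i ≠ j) : RBefore L i j ∨ RBefore L j i := by
  have : L.idxOf i ≠ L.idxOf j := fun h => hne ((List.idxOf_inj hi).mp h)
  rcases Nat.lt_or_gt_of_ne this with h | h
  · exact Or.inl ⟨hi, hj, h⟩
  · exact Or.inr ⟨hj, hi, h⟩

end RBefore

section ListOrder

variable {L A B : List ℕ} {x y : ℕ}

lemma idxOf_eq_length_of_eq_append_cons (hx : x ∉ A) (hL : L = A ++ x :: B) :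
    L.idxOf x = A.length := by
  simp [hL, List.idxOf_append_of_notMem hx]

lemma rbefore_iff_mem_right (hnd : L.Nodup) (hL : L = A ++ x :: B) :
    RBefore L x y ↔ y ∈ B := by
  have hnd' := List.nodup_append.mp (hL ▸ hnd)
  have hxA : x ∉ A := fun h => hnd'.2.2 x h x (by simp) rfl
  rw [RBefore, idxOf_eq_length_of_eq_append_cons hxA hL]
  constructor
  · rintro ⟨-, hy, h⟩
    rw [hL] at hy
    rcases List.mem_append.mp hy with hyA | hyB
    · have := List.idxOf_lt_length_iff.mpr hyA
      rw [hL, List.idxOf_append_of_mem hyA] at h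
      omega
    · rcases List.mem_cons.mp hyB with hyx | hyB
      · rw [hyx, idxOf_eq_length_of_eq_append_cons hxA hL] at h
        omega
      · exact hyB
  · intro hy
    have hyA : y ∉ A := fun h => hnd'.2.2 y h y (by simp [hy]) rfl
    have hyx : y ≠ x := fun h => (List.nodup_cons.mp hnd'.2.1).1 (h ▸ hy)
    refine ⟨by simp [hL], by simp [hL, hy], ?_⟩
    rw [hL, List.idxOf_append_of_notMem hyA, List.idxOf_cons_ne _ (Ne.symm hyx)]
    omega

lemma not_rbefore_between (hnd : L.Nodup) (hL : L = A ++ x :: y :: B) {z : ℕ}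
    (hxz : RBefore L x z) (hzy : RBefore L z y) : False := by
  rcases List.mem_cons.mp ((rbefore_iff_mem_right hnd hL).mp hxz) with rfl | hzB
  · exact hzy.irrefl
  · exact hzy.asymm ((rbefore_iff_mem_right hnd (A := A ++ [x]) (by simp [hL])).mpr hzB)

variable {p : ℕ → Bool} {i j : ℕ}

lemma RBefore.filter (hnd : L.Nodup) (hi : p i) (hj : p j) (h : RBefore L i j) :
    RBefore (L.filter p) i j := by
  obtain ⟨A, B, hL⟩ := List.append_of_mem h.1
  have hjB := (rbefore_iff_mem_right hnd hL).mp h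
  refine (rbefore_iff_mem_right (hnd.filter p) (A := A.filter p) (B := B.filter p) ?_).mpr
    (List.mem_filter.mpr ⟨hjB, hj⟩)
  simp [hL, List.filter_append, hi]

lemma rbefore_filter_iff (hnd : L.Nodup) (hi : p i) (hj : p j) :
    RBefore (L.filter p) i j ↔ RBefore L i j := by
  refine ⟨fun h => ?_, RBefore.filter hnd hi hj⟩
  have hiL := (List.mem_filter.mp h.1).1
  have hjL := (List.mem_filter.mp h.2.1).1
  have hne : i ≠ j := by rintro rfl; exact h.irrefl
  exact (RBefore.total hiL hjL hne).resolve_right fun h' => h.asymm (h'.filter hnd hj hi)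

end ListOrder

namespace LockAlt

variable {l : ℕ}

lemma of_pairsLang {w : List Event} (h : PairsLang l w) : LockAlt l w := by
  induction h with
  | nil => exact .nil
  | pair t _ ih => exact .pair t ih

lemma singleton {e : Event} (h : LockAlt l [e]) : ∃ t, e = ⟨t, Op.acq l⟩ := by
  cases h with | pending t => exact ⟨t, rfl⟩

lemma cons_cons {e e' : Event} {es : List Event} (h : LockAlt l (e :: e' :: es)) :
    ∃ t, e = ⟨t, Op.acq l⟩ ∧ e' = ⟨t, Op.rel l⟩ ∧ LockAlt l es := by
  cases h with | pair t h => exact ⟨t, rfl, rfl, h⟩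

lemma eq_rel_of_acq {es A C : List Event} {e e' : Event} (h : LockAlt l es)
    (hes : es = A ++ e :: e' :: C) (he : e.op = Op.acq l) : e' = ⟨e.thread, Op.rel l⟩ := by
  induction h generalizing A with
  | nil => simp at hes
  | pending t =>
    have := congrArg List.length hes
    simp at this
    omega
  | pair t _ ih =>
    match A with
    | [] =>
      obtain ⟨rfl, rfl, -⟩ := by simpa using hes
      rfl
    | [_] =>
      obtain ⟨-, rfl, -⟩ := by simpa using hes
      simp at he
    | _ :: _ :: A =>
      simp only [List.cons_append, List.cons.injEq] at hes
      exact ih hes.2.2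

variable {α : Type*} {f : α → Event} {p : α → Bool}

theorem exists_acq_of_mem : ∀ {w : List α}, LockAlt l (w.map f) →
    (∀ a r rest, a :: r :: rest <:+ w → (f a).op = Op.acq l → p r → p a) →
    ∀ b ∈ w, p b → ∃ c ∈ w, p c ∧ (f c).op = Op.acq l
  | [], _, _, b, hb, _ => by simp at hb
  | [a], h, _, b, hb, hpb => by
    obtain ⟨t, ha⟩ := singleton h
    rw [List.mem_singleton.mp hb] at hpb
    exact ⟨a, by simp, hpb, by rw [ha]⟩
  | a :: r :: rest, h, hclosed, b, hb, hpb => by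
    obtain ⟨t, ha, -, hrest⟩ := cons_cons h
    have haop : (f a).op = Op.acq l := by rw [ha]
    rcases List.mem_cons.mp hb with rfl | hb
    · exact ⟨b, by simp, hpb, haop⟩
    rcases List.mem_cons.mp hb with rfl | hb
    · exact ⟨a, by simp, hclosed a b rest (List.suffix_refl _) haop hpb, haop⟩
    obtain ⟨c, hc, hpc, hcop⟩ := exists_acq_of_mem hrest
      (fun a' r' rest' hs => hclosed a' r' rest' (hs.trans ⟨[a, r], rfl⟩)) b hb hpb
    exact ⟨c, by simp [hc], hpc, hcop⟩

theorem filter_map : ∀ {w : List α}, LockAlt l (w.map f) →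
    (∀ a r rest, a :: r :: rest <:+ w → (f a).op = Op.acq l → p r → p a) →
    (∀ a r rest c, a :: r :: rest <:+ w → (f a).op = Op.acq l →
      c ∈ rest → p c → (f c).op = Op.acq l → p a → p r) →
    LockAlt l ((w.filter p).map f)
  | [], _, _, _ => .nil
  | [a], h, _, _ => by
    obtain ⟨t, ha⟩ := singleton h
    by_cases hpa : p a
    · simpa [hpa, ha] using LockAlt.pending t
    · simpa [hpa] using LockAlt.nil
  | a :: r :: rest, h, hclosed, hnext => by
    obtain ⟨t, ha, hr, hrest⟩ := cons_cons h
    have haop : (f a).op = Op.acq l := by rw [ha]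
    have hsuf : rest <:+ a :: r :: rest := ⟨[a, r], rfl⟩
    have hclosed' := fun a' r' rest' (hs : a' :: r' :: rest' <:+ rest) =>
      hclosed a' r' rest' (hs.trans hsuf)
    have ih := filter_map hrest hclosed' fun a' r' rest' c hs => hnext a' r' rest' c (hs.trans hsuf)
    by_cases hpa : p a
    · by_cases hpr : p r
      · simpa [hpa, hpr, ha, hr] using LockAlt.pair t ih
      · have hnil : rest.filter p = [] := List.filter_eq_nil_iff.mpr fun b hb hpb => hpr <| by
          obtain ⟨c, hc, hpc, hcop⟩ := exists_acq_of_mem hrest hclosed' b hb hpb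
          exact hnext a r rest c (List.suffix_refl _) haop hc hpc hcop hpa
        simpa [hpa, hpr, hnil, ha] using LockAlt.pending t
    · have hpr : ¬ p r := fun hpr => hpa (hclosed a r rest (List.suffix_refl _) haop hpr)
      simpa [hpa, hpr] using ih

end LockAlt

section Trace

variable {σ : List Event}

lemma evAt_eq_getElem {i : ℕ} (h : i < σ.length) : evAt σ i = σ[i] := by
  simp [evAt, List.getD_eq_getElem?_getD, h]

lemma onLock_eq_true_iff {l : ℕ} {e : Event} :
    onLock l e = true ↔ e.op = Op.acq l ∨ e.op = Op.rel l := by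
  simp [onLock]

lemma isAcq.onLock {l i : ℕ} (h : isAcq σ l i) : onLock l (evAt σ i) = true :=
  onLock_eq_true_iff.mpr (Or.inl h.2)

lemma isRel.onLock {l i : ℕ} (h : isRel σ l i) : onLock l (evAt σ i) = true :=
  onLock_eq_true_iff.mpr (Or.inr h.2)

lemma isAcq.not_isRel {l l' i : ℕ} (h : isAcq σ l i) (h' : isRel σ l' i) : False := by
  have := h.2.symm.trans h'.2
  simp at this

lemma filter_drop_eq_of_forall {q : Event → Bool} {n k : ℕ} (hnk : n ≤ k)
    (hq : ∀ m, n ≤ m → m < k → q (evAt σ m) = false) :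
    (σ.drop n).filter q = (σ.drop k).filter q := by
  induction k, hnk using Nat.le_induction with
  | base => rfl
  | succ k hnk ih =>
    rw [ih fun m hm hmk => hq m hm (by omega)]
    by_cases hk : k < σ.length
    · have := hq k hnk (by omega)
      rw [evAt_eq_getElem hk] at this
      rw [List.drop_eq_getElem_cons hk, List.filter_cons_of_neg (by simp [this])]
    · rw [List.drop_eq_nil_of_le (not_lt.mp hk), List.drop_eq_nil_of_le (by omega)]

lemma LockSem.eq_rel_of_next {l a k : ℕ} (hWF : LockSem σ) (ha : isAcq σ l a) (hak : a < k)
    (hk : k < σ.length) (hkl : onLock l (evAt σ k))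
    (hnone : ∀ m, a < m → m < k → onLock l (evAt σ m) = false) :
    evAt σ k = ⟨threadOf σ a, Op.rel l⟩ := by
  obtain ⟨w, hw, tl, hpre⟩ := hWF l
  have hsplit : σ.filter (onLock l) = (σ.take a).filter (onLock l) ++
      evAt σ a :: evAt σ k :: (σ.drop (k + 1)).filter (onLock l) := by
    have hdrop := filter_drop_eq_of_forall (q := onLock l) (Nat.succ_le_of_lt hak)
      fun m ham hmk => hnone m ham hmk
    have hal := ha.onLock
    rw [evAt_eq_getElem ha.1] at hal ⊢
    rw [evAt_eq_getElem hk] at hkl ⊢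
    conv_lhs => rw [← List.take_append_drop a σ, List.drop_eq_getElem_cons ha.1]
    rw [List.filter_append, List.filter_cons_of_pos hal, hdrop, List.drop_eq_getElem_cons hk,
      List.filter_cons_of_pos hkl]
  exact (LockAlt.of_pairsLang hw).eq_rel_of_acq
    (by rw [← hpre, hsplit, List.append_assoc, List.cons_append, List.cons_append]) ha.2

lemma LockSem.exists_matchRel {l a c : ℕ} (hWF : LockSem σ) (ha : isAcq σ l a) (hac : a < c)
    (hc : c < σ.length) (hcl : onLock l (evAt σ c)) : ∃ r ≤ c, MatchRel σ a r := by
  classical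
  have hex : ∃ m, a < m ∧ m < σ.length ∧ onLock l (evAt σ m) = true := ⟨c, hac, hc, hcl⟩
  obtain ⟨har, hr, hrl⟩ := Nat.find_spec hex
  have hnone : ∀ m, a < m → m < Nat.find hex → onLock l (evAt σ m) = false := by
    intro m ham hmr
    by_contra h
    exact Nat.find_min hex hmr ⟨ham, hmr.trans hr, by simpa using h⟩
  have hev := hWF.eq_rel_of_next ha har hr hrl hnone
  refine ⟨Nat.find hex, Nat.find_min' hex ⟨hac, hc, hcl⟩, l, ha, ⟨hr, by rw [hev]⟩, har,
    by simp [threadOf, hev], fun m ham hmr hm => ?_⟩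
  have := hnone m ham hmr
  rcases hm with hm | hm
  · simp [hm.onLock] at this
  · simp [hm.onLock] at this

lemma MatchRel.of_isAcq {l a r : ℕ} (hm : MatchRel σ a r) (ha : isAcq σ l a) :
    isRel σ l r ∧ a < r ∧ threadOf σ a = threadOf σ r ∧
      ∀ k, a < k → k < r → ¬ (isAcq σ l k ∨ isRel σ l k) := by
  obtain ⟨l', ha', hrest⟩ := hm
  obtain rfl : l' = l := by simpa using ha'.2.symm.trans ha.2
  exact hrest

lemma MatchRel.le_of_lt {l a r k : ℕ} (hm : MatchRel σ a r) (ha : isAcq σ l a) (hak : a < k)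
    (hk : isAcq σ l k ∨ isRel σ l k) : r ≤ k :=
  not_lt.mp fun hkr => (hm.of_isAcq ha).2.2.2 k hak hkr hk

lemma MatchRel.lt_of_isAcq {l a r a' : ℕ} (hm : MatchRel σ a r) (ha : isAcq σ l a)
    (ha' : isAcq σ l a') (haa' : a < a') : r < a' :=
  lt_of_le_of_ne (hm.le_of_lt ha haa' (Or.inl ha'))
    fun h => ha'.not_isRel (h ▸ (hm.of_isAcq ha).1)

lemma TO.trans {i j k : ℕ} (hij : TO σ i j) (hjk : TO σ j k) : TO σ i k :=
  ⟨hij.1.trans hjk.1, hjk.2.1, hij.2.2.trans hjk.2.2⟩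

end Trace

def lockEvents (σ : List Event) (ρ : List ℕ) (l : ℕ) : List ℕ :=
  ρ.filter fun i => onLock l (evAt σ i)

section Reordering

variable {σ : List Event} {ρ : List ℕ} {l i j : ℕ}

lemma mem_lockEvents : i ∈ lockEvents σ ρ l ↔ i ∈ ρ ∧ onLock l (evAt σ i) = true :=
  List.mem_filter

lemma rbefore_lockEvents_iff (hnd : ρ.Nodup) (hi : i ∈ lockEvents σ ρ l)
    (hj : j ∈ lockEvents σ ρ l) : RBefore (lockEvents σ ρ l) i j ↔ RBefore ρ i j :=
  rbefore_filter_iff hnd (mem_lockEvents.mp hi).2 (mem_lockEvents.mp hj).2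

lemma LastWriteIn.unique {i' : ℕ} (h : LastWriteIn σ ρ i j) (h' : LastWriteIn σ ρ i' j) :
    i = i' := by
  obtain ⟨x, hw, hr, hb, hmax⟩ := h
  obtain ⟨x', hw', hr', hb', hmax'⟩ := h'
  obtain rfl : x = x' := by simpa using hr.2.symm.trans hr'.2
  by_contra hne
  rcases RBefore.total hb.1 hb'.1 hne with h | h
  · exact hmax i' hw' ⟨h, hb'⟩
  · exact hmax' i hw ⟨h, hb⟩

lemma exists_lastWriteIn {x : ℕ} (hw : isWrite σ x i) (hr : isRead σ x j)
    (hb : RBefore ρ i j) :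
    ∃ k, LastWriteIn σ ρ k j := by
  classical
  set s := ρ.toFinset.filter fun k => isWrite σ x k ∧ RBefore ρ k j
  have hmem : ∀ {k}, k ∈ s ↔ isWrite σ x k ∧ RBefore ρ k j := fun {k} => by
    simp only [s, Finset.mem_filter, List.mem_toFinset, and_iff_right_iff_imp]
    exact fun h => h.2.1
  obtain ⟨k, hk, hmax⟩ := s.exists_max_image ρ.idxOf ⟨i, hmem.mpr ⟨hw, hb⟩⟩
  obtain ⟨hkw, hkb⟩ := hmem.mp hk
  exact ⟨k, x, hkw, hr, hkb, fun k' hk' ⟨h1, h2⟩ =>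
    absurd (hmax k' (hmem.mpr ⟨hk', h2⟩)) (not_le.mpr h1.2.2)⟩

lemma SyncPreserving.filter (hnd : ρ.Nodup) (hsp : SyncPreserving σ ρ) (p : ℕ → Bool) :
    SyncPreserving σ (ρ.filter p) := by
  intro l a1 a2 ha1 ha2 m1 m2
  rw [rbefore_filter_iff hnd (List.mem_filter.mp m1).2 (List.mem_filter.mp m2).2]
  exact hsp l a1 a2 ha1 ha2 (List.mem_filter.mp m1).1 (List.mem_filter.mp m2).1

namespace CorrectReordering

lemma lockAlt_lockEvents (hρ : CorrectReordering σ ρ) (l : ℕ) :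
    LockAlt l ((lockEvents σ ρ l).map (evAt σ)) := by
  have := hρ.2.2.1 l
  rwa [List.filter_map] at this

lemma rbefore_of_to (hρ : CorrectReordering σ ρ) (hne : i ≠ j) (h : TO σ i j)
    (hj : j ∈ ρ) :
    RBefore ρ i j :=
  hρ.2.2.2.2.1 i j (hρ.2.2.2.1 i j h hj) hj hne h

lemma lt_of_rbefore (hρ : CorrectReordering σ ρ) (hth : threadOf σ i = threadOf σ j)
    (h : RBefore ρ i j) : i < j := by
  refine lt_of_not_ge fun hji => ?_
  have hne : j ≠ i := by
    rintro rfl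
    exact h.irrefl
  exact h.asymm (hρ.rbefore_of_to hne ⟨hji, hρ.2.1 i h.1, hth.symm⟩ h.1)

lemma rbefore_of_lastWrite (hρ : CorrectReordering σ ρ) (hlw : LastWrite σ i j)
    (hj : j ∈ ρ) :
    RBefore ρ i j := by
  obtain ⟨x, -, hr, -⟩ := id hlw
  obtain ⟨-, -, -, hb, -⟩ := (hρ.2.2.2.2.2 j x hr hj i).mpr hlw
  exact hb

variable {a r : ℕ} {pre rest : List ℕ}

lemma exists_adjacent (hρ : CorrectReordering σ ρ) (ha : isAcq σ l a)
    {c : ℕ} (hc : onLock l (evAt σ c) = true) (hac : RBefore ρ a c) :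
    ∃ pre r rest, lockEvents σ ρ l = pre ++ a :: r :: rest ∧ c ∈ r :: rest := by
  have hmem : a ∈ lockEvents σ ρ l := mem_lockEvents.mpr ⟨hac.1, ha.onLock⟩
  have hcmem : c ∈ lockEvents σ ρ l := mem_lockEvents.mpr ⟨hac.2.1, hc⟩
  obtain ⟨pre, B, hL⟩ := List.append_of_mem hmem
  have hcB := (rbefore_iff_mem_right (hρ.1.filter _) hL).mp
    ((rbefore_lockEvents_iff hρ.1 hmem hcmem).mpr hac)
  obtain ⟨r, rest, rfl⟩ := List.exists_cons_of_ne_nil (List.ne_nil_of_mem hcB)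
  exact ⟨pre, r, rest, hL, hcB⟩

lemma mem_of_adjacent (hL : lockEvents σ ρ l = pre ++ a :: r :: rest) :
    a ∈ ρ ∧ r ∈ ρ := by
  have hmem : a ∈ lockEvents σ ρ l ∧ r ∈ lockEvents σ ρ l := by simp [hL]
  exact ⟨(mem_lockEvents.mp hmem.1).1, (mem_lockEvents.mp hmem.2).1⟩

lemma isAcq_of_adjacent (hρ : CorrectReordering σ ρ)
    (hL : lockEvents σ ρ l = pre ++ a :: r :: rest) (ha : (evAt σ a).op = Op.acq l) :
    isAcq σ l a :=
  ⟨hρ.2.1 a (mem_of_adjacent hL).1, ha⟩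

lemma evAt_of_adjacent (hρ : CorrectReordering σ ρ)
    (hL : lockEvents σ ρ l = pre ++ a :: r :: rest) (ha : (evAt σ a).op = Op.acq l) :
    evAt σ r = ⟨threadOf σ a, Op.rel l⟩ :=
  (hρ.lockAlt_lockEvents l).eq_rel_of_acq
    (by rw [hL, List.map_append, List.map_cons, List.map_cons]) ha

lemma isRel_of_adjacent (hρ : CorrectReordering σ ρ)
    (hL : lockEvents σ ρ l = pre ++ a :: r :: rest) (ha : (evAt σ a).op = Op.acq l) :
    isRel σ l r :=
  ⟨hρ.2.1 r (mem_of_adjacent hL).2, by rw [hρ.evAt_of_adjacent hL ha]⟩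

lemma to_of_adjacent (hρ : CorrectReordering σ ρ)
    (hL : lockEvents σ ρ l = pre ++ a :: r :: rest) (ha : (evAt σ a).op = Op.acq l) :
    TO σ a r := by
  have hmem : a ∈ lockEvents σ ρ l ∧ r ∈ lockEvents σ ρ l := by simp [hL]
  have hb : RBefore ρ a r := (rbefore_lockEvents_iff hρ.1 hmem.1 hmem.2).mp
    ((rbefore_iff_mem_right (hρ.1.filter _) hL).mpr (by simp))
  have hth : threadOf σ a = threadOf σ r := by simp [threadOf, hρ.evAt_of_adjacent hL ha]
  exact ⟨(hρ.lt_of_rbefore hth hb).le, hρ.2.1 r hb.2.1, hth⟩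

lemma lt_of_adjacent (hρ : CorrectReordering σ ρ)
    (hL : lockEvents σ ρ l = pre ++ a :: r :: rest) (ha : (evAt σ a).op = Op.acq l) :
    a < r :=
  lt_of_le_of_ne (hρ.to_of_adjacent hL ha).1 fun h =>
    (hρ.isAcq_of_adjacent hL ha).not_isRel (h ▸ hρ.isRel_of_adjacent hL ha)

/-- Lock events of `σ` outside `ρ` may lie between `a` and `r`, but a matching release of `a`
before `r` would be thread-ordered before `r`, hence in `ρ` and between `a` and `r` there. -/
lemma eq_of_matchRel_of_adjacent (hρ : CorrectReordering σ ρ)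
    (hL : lockEvents σ ρ l = pre ++ a :: r :: rest) (ha : (evAt σ a).op = Op.acq l)
    {r' : ℕ} (hm : MatchRel σ a r') : r' = r := by
  have haacq := hρ.isAcq_of_adjacent hL ha
  have hTO := hρ.to_of_adjacent hL ha
  have hrρ : r ∈ ρ := (mem_of_adjacent hL).2
  obtain ⟨hrel', har', hth', -⟩ := hm.of_isAcq haacq
  refine (hm.le_of_lt haacq (hρ.lt_of_adjacent hL ha)
    (Or.inr (hρ.isRel_of_adjacent hL ha))).eq_or_lt.resolve_right fun hlt => ?_
  have hTO' : TO σ r' r := ⟨hlt.le, hTO.2.1, hth'.symm.trans hTO.2.2⟩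
  have hr'ρ : r' ∈ ρ := hρ.2.2.2.1 _ _ hTO' hrρ
  have hmem : a ∈ lockEvents σ ρ l ∧ r ∈ lockEvents σ ρ l := by simp [hL]
  have hr'mem : r' ∈ lockEvents σ ρ l := mem_lockEvents.mpr ⟨hr'ρ, hrel'.onLock⟩
  exact not_rbefore_between (hρ.1.filter _) hL
    ((rbefore_lockEvents_iff hρ.1 hmem.1 hr'mem).mpr
      (hρ.rbefore_of_to har'.ne ⟨har'.le, hrel'.1, hth'⟩ hr'ρ))
    ((rbefore_lockEvents_iff hρ.1 hr'mem hmem.2).mpr (hρ.rbefore_of_to hlt.ne hTO' hrρ))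

lemma matchRel_of_adjacent (hWF : LockSem σ) (hρ : CorrectReordering σ ρ)
    (hL : lockEvents σ ρ l = pre ++ a :: r :: rest) (ha : (evAt σ a).op = Op.acq l) :
    MatchRel σ a r := by
  obtain ⟨r', -, hm⟩ := hWF.exists_matchRel (hρ.isAcq_of_adjacent hL ha)
    (hρ.lt_of_adjacent hL ha) (hρ.to_of_adjacent hL ha).2.1 (hρ.isRel_of_adjacent hL ha).onLock
  rwa [hρ.eq_of_matchRel_of_adjacent hL ha hm] at hm

lemma spClosed_rbefore_or_lt (hρ : CorrectReordering σ ρ) (hsp : SyncPreserving σ ρ)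
    (e b : ℕ) :
    SPClosed σ {i | i ∈ ρ ∧ (RBefore ρ i e ∨ i < b)} := by
  refine ⟨⟨?_, ?_⟩, ?_⟩
  · rintro i j hij ⟨hj, hje | hjb⟩
    · refine ⟨hρ.2.2.2.1 i j hij hj, Or.inl ?_⟩
      rcases eq_or_ne i j with rfl | hne
      · exact hje
      · exact (hρ.rbefore_of_to hne hij hj).trans hje
    · exact ⟨hρ.2.2.2.1 i j hij hj, Or.inr (lt_of_le_of_lt hij.1 hjb)⟩
  · rintro i j hlw ⟨hj, hje | hjb⟩
    · have hb := hρ.rbefore_of_lastWrite hlw hj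
      exact ⟨hb.1, Or.inl (hb.trans hje)⟩
    · obtain ⟨-, -, -, hij, -⟩ := id hlw
      exact ⟨(hρ.rbefore_of_lastWrite hlw hj).1, Or.inr (hij.trans hjb)⟩
  · rintro l a1 a2 r1 ha1 ha2 h12 ⟨m1, -⟩ ⟨m2, h2e | h2b⟩ hm
    all_goals
      obtain ⟨pre, r, rest, hL, ha2mem⟩ :=
        hρ.exists_adjacent ha1 ha2.onLock ((hsp l a1 a2 ha1 ha2 m1 m2).mpr h12)
      obtain rfl := hρ.eq_of_matchRel_of_adjacent hL ha1.2 hm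
      refine ⟨(mem_of_adjacent hL).2, ?_⟩
    · have ha2rest : a2 ∈ rest := (List.mem_cons.mp ha2mem).resolve_left
        fun h => ha2.not_isRel (h ▸ hρ.isRel_of_adjacent hL ha1.2)
      have hmem : r1 ∈ lockEvents σ ρ l := by simp [hL]
      have hmem2 : a2 ∈ lockEvents σ ρ l := mem_lockEvents.mpr ⟨m2, ha2.onLock⟩
      have hb := (rbefore_iff_mem_right (L := lockEvents σ ρ l) (A := pre ++ [a1]) (x := r1)
        (hρ.1.filter _) (by simp [hL])).mpr ha2rest
      exact Or.inl (((rbefore_lockEvents_iff hρ.1 hmem hmem2).mp hb).trans h2e)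
    · exact Or.inr ((hm.lt_of_isAcq ha1 ha2 h12).trans h2b)

variable {S : Set ℕ} [DecidablePred (· ∈ S)]

lemma wellFormedEvents_filter (hWF : LockSem σ) (hρ : CorrectReordering σ ρ)
    (hsp : SyncPreserving σ ρ) (hS : SPClosed σ S) :
    WellFormedEvents ((ρ.filter (· ∈ S)).map (evAt σ)) := by
  intro l
  rw [List.filter_map, List.filter_comm]
  refine (hρ.lockAlt_lockEvents l).filter_map ?_ ?_
  · rintro a r rest ⟨pre, hL⟩ ha hr
    simpa using hS.1.1 a r (hρ.to_of_adjacent hL.symm ha) (by simpa using hr)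
  · rintro a r rest c ⟨pre, hL⟩ ha hc hcS hcacq haS
    have hcmem : c ∈ lockEvents σ ρ l := by simp [← hL, hc]
    have hamem : a ∈ lockEvents σ ρ l := by simp [← hL]
    have hac : RBefore ρ a c := (rbefore_lockEvents_iff hρ.1 hamem hcmem).mp
      ((rbefore_iff_mem_right (hρ.1.filter _) hL.symm).mpr (by simp [hc]))
    have haacq := hρ.isAcq_of_adjacent hL.symm ha
    have hcacq' : isAcq σ l c := ⟨hρ.2.1 c hac.2.1, hcacq⟩
    simpa using hS.2 l a c r haacq hcacq' ((hsp l a c haacq hcacq' hac.1 hac.2.1).mp hac)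
      (by simpa using haS) (by simpa using hcS) (hρ.matchRel_of_adjacent hWF hL.symm ha)

lemma lastWriteIn_filter_iff (hρ : CorrectReordering σ ρ)
    (hS : ∀ i j, LastWrite σ i j → j ∈ S → i ∈ S) {x : ℕ} (hr : isRead σ x j)
    (hj : j ∈ ρ.filter (· ∈ S)) :
    LastWriteIn σ (ρ.filter (· ∈ S)) i j ↔ LastWrite σ i j := by
  obtain ⟨hjρ, hjS⟩ : j ∈ ρ ∧ j ∈ S := by simpa using hj
  have hfilter : ∀ {k}, k ∈ ρ.filter (· ∈ S) → decide (k ∈ S) = true := fun hk =>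
    (List.mem_filter.mp hk).2
  have hback : ∀ i, LastWrite σ i j → LastWriteIn σ (ρ.filter (· ∈ S)) i j := by
    intro i hlw
    obtain ⟨x', hw, hr', hb, hmax⟩ := (hρ.2.2.2.2.2 j x hr hjρ i).mpr hlw
    have hiS : i ∈ S := hS i j hlw hjS
    refine ⟨x', hw, hr', (rbefore_filter_iff hρ.1 (by simpa using hiS) (hfilter hj)).mpr hb,
      fun k hk ⟨h1, h2⟩ => hmax k hk ⟨?_, ?_⟩⟩
    · exact (rbefore_filter_iff hρ.1 (by simpa using hiS) (hfilter h1.2.1)).mp h1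
    · exact (rbefore_filter_iff hρ.1 (hfilter h2.1) (hfilter hj)).mp h2
  refine ⟨fun h => ?_, hback i⟩
  obtain ⟨x', hw, hr', hb, -⟩ := id h
  obtain ⟨k, hk⟩ := exists_lastWriteIn hw hr'
    ((rbefore_filter_iff hρ.1 (hfilter hb.1) (hfilter hj)).mp hb)
  have hlw := (hρ.2.2.2.2.2 j x' hr' hjρ k).mp hk
  rwa [h.unique (hback k hlw)]

theorem filter (hWF : LockSem σ) (hρ : CorrectReordering σ ρ) (hsp : SyncPreserving σ ρ)
    (hS : SPClosed σ S) : CorrectReordering σ (ρ.filter (· ∈ S)) := by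
  have hmem : ∀ {i}, i ∈ ρ.filter (· ∈ S) ↔ i ∈ ρ ∧ i ∈ S := by simp
  refine ⟨hρ.1.filter _, fun i hi => hρ.2.1 i (hmem.mp hi).1,
    hρ.wellFormedEvents_filter hWF hsp hS, fun i j hij hj => ?_, fun i j hi hj hne hij => ?_,
    fun j x hr hj i => hρ.lastWriteIn_filter_iff hS.1.2 hr hj⟩
  · exact hmem.mpr ⟨hρ.2.2.2.1 i j hij (hmem.mp hj).1, hS.1.1 i j hij (hmem.mp hj).2⟩
  · exact (rbefore_filter_iff hρ.1 (List.mem_filter.mp hi).2 (List.mem_filter.mp hj).2).mpr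
      (hρ.2.2.2.2.1 i j (hmem.mp hi).1 (hmem.mp hj).1 hne hij)

end CorrectReordering

end Reordering

theorem stmt6_general (σ : List Event) (hWF : LockSem σ) (e1 e2 e2' : ℕ)
    (h12 : e1 < e2) (hTO : TO σ e2 e2')
    (hc : Conflict σ e1 e2)
    (hnr : ¬ SPRace σ e1 e2) :
    ¬ SPRace σ e1 e2' := by
  rintro ⟨-, ρ, hρ, hsp, ⟨he1, he1ρ, hpred1⟩, hen2'⟩
  rcases eq_or_ne e2 e2' with rfl | hne
  · exact hnr ⟨hc, ρ, hρ, hsp, ⟨he1, he1ρ, hpred1⟩, hen2'⟩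
  have he2ρ : e2 ∈ ρ := hen2'.2.2 e2 hne hTO
  classical
  let S := {i | i ∈ ρ ∧ (RBefore ρ i e2 ∨ i < e1)}
  have hmem : ∀ {i}, i ∈ ρ.filter (· ∈ S) ↔ i ∈ S := by simp [S]
  refine hnr ⟨hc, ρ.filter (· ∈ S), hρ.filter hWF hsp (hρ.spClosed_rbefore_or_lt hsp e2 e1),
    hsp.filter hρ.1 _, ⟨he1, fun h => he1ρ (hmem.mp h).1, fun i hi hiTO => ?_⟩,
    ⟨hc.2.1, fun h => ?_, fun i hi hiTO => ?_⟩⟩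
  · exact hmem.mpr ⟨hpred1 i hi hiTO, Or.inr (lt_of_le_of_ne hiTO.1 hi)⟩
  · rcases (hmem.mp h).2 with h | h
    · exact h.irrefl
    · exact lt_asymm h12 h
  · have hi' : i ≠ e2' := fun h => hne (le_antisymm hTO.1 (h ▸ hiTO.1))
    exact hmem.mpr ⟨hen2'.2.2 i hi' (hiTO.trans hTO), Or.inl (hρ.rbefore_of_to hi hiTO he2ρ)⟩

/-- if `e1 <_σ e2`, `e2 ≤_TO e2'`, `e1` conflicts with both `e2` and
`e2'`, and `(e1, e2)` is not a sync-preserving race of `σ`, then `(e1, e2')` is also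
not a sync-preserving race of `σ`. -/
theorem stmt6 (σ : List Event) (hWF : LockSem σ) (e1 e2 e2' : ℕ)
    (h12 : e1 < e2) (hTO : TO σ e2 e2')
    (hc : Conflict σ e1 e2) (hc' : Conflict σ e1 e2')
    (hnr : ¬ SPRace σ e1 e2) :
    ¬ SPRace σ e1 e2' :=
  stmt6_general σ hWF e1 e2 e2' h12 hTO hc hnr
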